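/- arXiv:0711.4287 — 9 statements merged into one kernel-verified Lean document; each statement's English description precedes it below -/
import Mathlib

section
/- Let m ∈ ℕ and let x = (x_0,…,x_m) ∈ ℕ^{m+1} satisfy x_i ≤ x_{i+1} for 0 ≤ i ≤ m−1 and x_i < x_{i+2} for 0 ≤ i ≤ m−2. Define 𝔖(x) as the set of indices i ∈ [0,m] with x_{i−1} < x_i < x_{i+1}, using the conventions x_{−1} = −∞ and x_{m+1} = +∞. Then |𝔖(x)| ≡ m − 1 (mod 2). -/
/-!
Induct on `m`. Appending `x_{m+1} ≥ x_m` changes `𝔖(x)` by exactly one index: if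
`x_m < x_{m+1}` the new index `m + 1` joins, and if `x_m = x_{m+1}` the old endpoint `m`
leaves (it was in `𝔖`, since `x_{m-1} < x_{m+1} = x_m`). Either way the parity flips,
and `𝔖(x_0) = {0}`.
-/

open Finset

/-- `X_m`: sequences `(x_0,…,x_m)` in `ℕ` with `x i ≤ x (i+1)` and `x i < x (i+2)`. -/
def IsX (m : ℕ) (x : ℕ → ℕ) : Prop :=
  (∀ i, i < m → x i ≤ x (i + 1)) ∧ (∀ i, i + 2 ≤ m → x i < x (i + 2))

/-- `Y_m`: sequences with `y i ≤ y (i+1)` and `y i + 2 ≤ y (i+2)`. -/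
def IsY (m : ℕ) (y : ℕ → ℕ) : Prop :=
  (∀ i, i < m → y i ≤ y (i + 1)) ∧ (∀ i, i + 2 ≤ m → y i + 2 ≤ y (i + 2))

/-- `ℰ_m`: weakly increasing sequences. -/
def IsE (m : ℕ) (e : ℕ → ℕ) : Prop := ∀ i, i < m → e i ≤ e (i + 1)

/-- `𝔖(x)`: indices `i ∈ [0,m]` with `x (i-1) < x i < x (i+1)`,
with conventions `x_{-1} = -∞`, `x_{m+1} = +∞`. -/
def SS (m : ℕ) (x : ℕ → ℕ) : Finset ℕ :=
  (Finset.range (m + 1)).filter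
    (fun i => (i = 0 ∨ x (i - 1) < x i) ∧ (i = m ∨ x i < x (i + 1)))

/-- `𝔉(y)`: intervals `[i,j] ⊆ [0,m]` with
`y_{i-1}-(i-1) < y_i-i = ⋯ = y_j-j < y_{j+1}-(j+1)` (conventions `±∞` at the ends),
encoded as pairs `(i, j)`. -/
def FF (m : ℕ) (y : ℕ → ℕ) : Finset (ℕ × ℕ) :=
  ((Finset.range (m + 1)) ×ˢ (Finset.range (m + 1))).filter
    (fun p => p.1 ≤ p.2 ∧
      (p.1 = 0 ∨ ((y (p.1 - 1) : ℤ) - ((p.1 : ℤ) - 1) < (y p.1 : ℤ) - (p.1 : ℤ))) ∧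
      (p.2 = m ∨ ((y p.2 : ℤ) - (p.2 : ℤ) < (y (p.2 + 1) : ℤ) - ((p.2 : ℤ) + 1))) ∧
      (∀ k ∈ Finset.Ico p.1 p.2, ((y k : ℤ) - (k : ℤ) = (y (k + 1) : ℤ) - ((k : ℤ) + 1))))

/-- `𝔉'(y)`: the intervals in `𝔉(y)` of odd cardinality. -/
def FF' (m : ℕ) (y : ℕ → ℕ) : Finset (ℕ × ℕ) :=
  (FF m y).filter (fun p => Odd (p.2 - p.1 + 1))

/-- `R(y)`: endpoints of intervals in `𝔉(y)`. -/
def RR (m : ℕ) (y : ℕ → ℕ) : Finset ℕ :=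
  (Finset.range (m + 1)).filter (fun k => ∃ p ∈ FF m y, k = p.1 ∨ k = p.2)

/-- `R_0(y)`: those `k` with `[k,k] ∈ 𝔉(y)`. -/
def RR0 (m : ℕ) (y : ℕ → ℕ) : Finset ℕ :=
  (Finset.range (m + 1)).filter (fun k => (k, k) ∈ FF m y)

/-- `S(y)`: pairs `(x, x') ∈ X_m × X_m` with `x + x' = y`,
`𝔖(x) ∪ 𝔖(x') = R(y)`, `𝔖(x) ∩ 𝔖(x') = R_0(y)`, and `𝔖(x') = ∅` if `𝔉'(y) = ∅`. -/
def IsS (m : ℕ) (y x x' : ℕ → ℕ) : Prop :=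
  IsX m x ∧ IsX m x' ∧ (∀ i, i ≤ m → x i + x' i = y i) ∧
  SS m x ∪ SS m x' = RR m y ∧ SS m x ∩ SS m x' = RR0 m y ∧
  (FF' m y = ∅ → SS m x' = ∅)

lemma mem_SS_iff {m : ℕ} {x : ℕ → ℕ} {i : ℕ} :
    i ∈ SS m x ↔ i ≤ m ∧ (i = 0 ∨ x (i - 1) < x i) ∧ (i = m ∨ x i < x (i + 1)) := by
  simp [SS]

lemma IsX.of_succ {m : ℕ} {x : ℕ → ℕ} (hx : IsX (m + 1) x) : IsX m x :=
  ⟨fun i hi => hx.1 i (by omega), fun i hi => hx.2 i (by omega)⟩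

lemma SS_zero (x : ℕ → ℕ) : SS 0 x = {0} := by
  ext i
  simp only [mem_SS_iff, mem_singleton]
  omega

lemma SS_succ_of_lt {m : ℕ} {x : ℕ → ℕ} (h : x m < x (m + 1)) :
    SS (m + 1) x = insert (m + 1) (SS m x) := by
  ext i
  simp only [mem_SS_iff, mem_insert]
  rcases lt_trichotomy i (m + 1) with hi | rfl | hi
  · have : i = m → x i < x (i + 1) := by rintro rfl; exact h
    grind
  · simpa using h
  · omega

lemma SS_succ_of_eq {m : ℕ} {x : ℕ → ℕ} (h : x m = x (m + 1)) :
    SS (m + 1) x = (SS m x).erase m := by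
  ext i
  simp only [mem_SS_iff, mem_erase]
  rcases lt_trichotomy i m with hi | rfl | hi
  · grind
  · omega
  · constructor
    · rintro ⟨hi', h1, -⟩
      obtain rfl : i = m + 1 := by omega
      simp [h] at h1
    · rintro ⟨-, hi', -⟩
      omega

lemma mem_SS_self {m : ℕ} {x : ℕ → ℕ} (hx : IsX (m + 1) x) (h : x m = x (m + 1)) :
    m ∈ SS m x := by
  refine mem_SS_iff.2 ⟨le_rfl, ?_, Or.inl rfl⟩
  rcases m with _ | m
  · exact Or.inl rfl
  · exact Or.inr (h ▸ hx.2 m (by omega))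

lemma card_SS_succ {m : ℕ} {x : ℕ → ℕ} (hx : IsX (m + 1) x) :
    (SS (m + 1) x).card = (SS m x).card + 1 ∨ (SS (m + 1) x).card + 1 = (SS m x).card := by
  rcases (hx.1 m (by omega)).lt_or_eq with hlt | heq
  · left
    rw [SS_succ_of_lt hlt, card_insert_of_notMem (by simp [mem_SS_iff])]
  · right
    rw [SS_succ_of_eq heq, card_erase_add_one (mem_SS_self hx heq)]

theorem stmt0 (m : ℕ) (x : ℕ → ℕ) (hx : IsX m x) :
    ((SS m x).card : ℤ) ≡ (m : ℤ) - 1 [ZMOD 2] := by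
  induction m with
  | zero => simp [SS_zero, Int.ModEq]
  | succ m ih =>
    have ih := ih hx.of_succ
    unfold Int.ModEq at ih ⊢
    rcases card_SS_succ hx with h | h <;> push_cast <;> omega
end

section
/- Let m ∈ ℕ and let y = (y_0,…,y_m) ∈ ℕ^{m+1} satisfy y_i ≤ y_{i+1} for 0 ≤ i ≤ m−1 and y_i + 2 ≤ y_{i+2} for 0 ≤ i ≤ m−2. Then the set 𝔉(y) of maximal intervals [i,j] ⊆ [0,m] on which k ↦ y_k − k is constant (i.e., y_{i−1}−(i−1) < y_i−i = … = y_j−j < y_{j+1}−(j+1), with conventions y_{−1} = −∞, y_{m+1} = +∞) is empty if and only if m is odd and y_{2i} = y_{2i+1} for all 0 ≤ i ≤ (m−1)/2. -/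
/-!
With `z k = y k - k`, an element of `𝔉(y)` is a maximal constant run of `z` entered and left by
strict ascents, and `y ∈ Y_m` says that `z` drops by at most `1` per step (exactly when
`y (k + 1) = y k`) and that `z k ≤ z (k + 2)`. If `𝔉(y)` is empty, a run entered by an ascent
must be left by a drop, and since no drop follows a flat step the run is a single index. From
`0` on this forces a drop at every even position, followed by an ascent; a drop is impossible at
`m`, so `m` is odd. Conversely, such pairings leave no index at which an element of `𝔉(y)` can
start.
-/

open Finset

lemma mem_FF_iff {m : ℕ} {y : ℕ → ℕ} {i j : ℕ} :
    (i, j) ∈ FF m y ↔ i ≤ j ∧ j ≤ m ∧ (i = 0 ∨ y (i - 1) + 1 < y i) ∧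
      (j = m ∨ y j + 1 < y (j + 1)) ∧ ∀ k ∈ Ico i j, y (k + 1) = y k + 1 := by
  simp only [FF, mem_filter, mem_product, mem_range, mem_Ico]
  constructor
  · rintro ⟨⟨-, hjm⟩, hij, hi, hj, hrun⟩
    refine ⟨hij, by omega, by omega, by omega, fun k hk => ?_⟩
    have := hrun k hk
    omega
  · rintro ⟨hij, hjm, hi, hj, hrun⟩
    refine ⟨⟨by omega, by omega⟩, hij, by omega, by omega, fun k hk => ?_⟩
    have := hrun k hk
    omega

namespace IsY

variable {m : ℕ} {y : ℕ → ℕ}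

theorem run_ends_with_flat_step (hy : IsY m y) {i : ℕ} (hi : i = 0 ∨ y (i - 1) + 1 < y i)
    (hF : ∀ j, (i, j) ∉ FF m y) {k : ℕ} (hik : i ≤ k) (hkm : k ≤ m)
    (hrun : ∀ l ∈ Ico i k, y (l + 1) = y l + 1) : k < m ∧ y (k + 1) ≤ y k := by
  have hk : ¬(k = m ∨ y k + 1 < y (k + 1)) :=
    fun h => hF k (mem_FF_iff.2 ⟨hik, hkm, hi, h, hrun⟩)
  refine ⟨by omega, ?_⟩
  by_contra hflat
  have hrun' : ∀ l ∈ Ico i (k + 1), y (l + 1) = y l + 1 := by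
    intro l hl
    obtain ⟨hil, hlk⟩ := mem_Ico.1 hl
    rcases Nat.lt_succ_iff_lt_or_eq.1 hlk with hlk | rfl
    · exact hrun l (mem_Ico.2 ⟨hil, hlk⟩)
    · omega
  have hnext := hy.run_ends_with_flat_step hi hF (by omega) (by omega) hrun'
  have hgap := hy.2 k (by omega)
  rw [show k + 1 + 1 = k + 2 by rfl] at hnext
  omega
termination_by m - k

theorem flat_at_even_of_FF_eq_empty (hy : IsY m y) (hF : FF m y = ∅) (r : ℕ)
    (hr : 2 * r ≤ m) : 2 * r < m ∧ y (2 * r + 1) ≤ y (2 * r) := by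
  induction r with
  | zero => exact hy.run_ends_with_flat_step (Or.inl rfl) (by simp [hF]) le_rfl hr (by simp)
  | succ r ih =>
    have hprev := (ih (by omega)).2
    have hgap : y (2 * r) + 2 ≤ y (2 * (r + 1)) := hy.2 (2 * r) (by omega)
    have hentry : y (2 * (r + 1) - 1) + 1 < y (2 * (r + 1)) := by
      rw [show 2 * (r + 1) - 1 = 2 * r + 1 by omega]
      omega
    exact hy.run_ends_with_flat_step (Or.inr hentry) (by simp [hF]) le_rfl hr (by simp)

end IsY

theorem FF_eq_empty_of_flat_at_even {m : ℕ} {y : ℕ → ℕ} (hm : Odd m)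
    (hflat : ∀ r, 2 * r < m → y (2 * r + 1) = y (2 * r)) : FF m y = ∅ := by
  obtain ⟨n, rfl⟩ := hm
  refine eq_empty_iff_forall_notMem.2 fun ⟨i, j⟩ hij => ?_
  obtain ⟨hij, hjm, hi, hj, hrun⟩ := mem_FF_iff.1 hij
  obtain ⟨r, rfl | rfl⟩ := Nat.even_or_odd' i
  · have hpair := hflat r (by omega)
    rcases hij.lt_or_eq with hlt | rfl
    · have := hrun (2 * r) (mem_Ico.2 ⟨le_rfl, hlt⟩)
      omega
    · omega
  · have hpair := hflat r (by omega)
    rw [show 2 * r + 1 - 1 = 2 * r by omega] at hi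
    omega

theorem stmt2 (m : ℕ) (y : ℕ → ℕ) (hy : IsY m y) :
    FF m y = ∅ ↔ Odd m ∧ ∀ i ≤ (m - 1) / 2, y (2 * i) = y (2 * i + 1) := by
  constructor
  · intro hF
    have hflat := hy.flat_at_even_of_FF_eq_empty hF
    have hm : Odd m := by
      by_contra heven
      obtain ⟨n, rfl⟩ := Nat.not_odd_iff_even.1 heven
      have := (hflat n (by omega)).1
      omega
    refine ⟨hm, fun i hi => ?_⟩
    obtain ⟨n, rfl⟩ := hm
    have hle := (hflat i (by omega)).2
    have hmono := hy.1 (2 * i) (by omega)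
    omega
  · rintro ⟨hm, hpair⟩
    refine FF_eq_empty_of_flat_at_even hm fun r hr => (hpair r ?_).symm
    obtain ⟨n, rfl⟩ := hm
    omega
end

section
/- Let m ∈ ℕ, let x, x' ∈ X_m, and set y = x + x' ∈ Y_m. Then 𝔖(x) ∪ 𝔖(x') ⊆ R(y), where R(y) is the set of endpoints of intervals in 𝔉(y). -/
/-!
Put `y = x + x'` and `z k = y k - k`. Since `y ∈ Y_m`, `z k ≤ z (k + 2)`: after a flat step of
`z` the next step cannot go down, so a flat run of `z` entered by a strict rise can only be left by
a strict rise (or at `m`), and symmetrically to the left. For `k ∈ 𝔖(x)` both `y`-steps around `k`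
are positive, so `z` does not decrease there. If `z` rises strictly into `k`, then `k` starts a
maximal run; otherwise `z (k - 1) = z k`, and `z` must rise strictly out of `k` because
`y (k + 1) - y (k - 1) ≥ 3` (two from `x`, one from `x'`), so `k` ends a maximal run.
-/

open Finset

section Runs

variable {m : ℕ} {z : ℕ → ℤ}

theorem exists_right_end_of_le_add_two (hz : ∀ t, t + 2 ≤ m → z t ≤ z (t + 2))
    (k : ℕ) (hk : k ≤ m) (hkz : k = m ∨ z k ≤ z (k + 1)) :
    ∃ j, k ≤ j ∧ j ≤ m ∧ (j = m ∨ z j < z (j + 1)) ∧ ∀ t ∈ Ico k j, z t = z (t + 1) := by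
  by_cases hkm : k = m
  · exact ⟨k, le_rfl, hk, Or.inl hkm, by simp⟩
  rcases (hkz.resolve_left hkm).lt_or_eq with hlt | heq
  · exact ⟨k, le_rfl, hk, Or.inr hlt, by simp⟩
  have hnext : k + 1 = m ∨ z (k + 1) ≤ z (k + 1 + 1) := by
    by_cases hk2 : k + 2 ≤ m
    · exact Or.inr (heq ▸ hz k hk2)
    · exact Or.inl (by omega)
  obtain ⟨j, hkj, hjm, hj, hconst⟩ :=
    exists_right_end_of_le_add_two hz (k + 1) (by omega) hnext
  refine ⟨j, by omega, hjm, hj, fun t ht => ?_⟩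
  rcases (mem_Ico.1 ht).1.eq_or_lt with rfl | hkt
  · exact heq
  · exact hconst t (mem_Ico.2 ⟨hkt, (mem_Ico.1 ht).2⟩)
termination_by m - k

theorem exists_left_end_of_le_add_two (hz : ∀ t, t + 2 ≤ m → z t ≤ z (t + 2))
    (k : ℕ) (hk : k ≤ m) (hkz : k = 0 ∨ z (k - 1) ≤ z k) :
    ∃ i, i ≤ k ∧ (i = 0 ∨ z (i - 1) < z i) ∧ ∀ t ∈ Ico i k, z t = z (t + 1) := by
  by_cases hk0 : k = 0
  · exact ⟨k, le_rfl, Or.inl hk0, by simp⟩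
  rcases (hkz.resolve_left hk0).lt_or_eq with hlt | heq
  · exact ⟨k, le_rfl, Or.inr hlt, by simp⟩
  have hsucc : k - 1 + 1 = k := by omega
  have hprev : k - 1 = 0 ∨ z (k - 1 - 1) ≤ z (k - 1) := by
    by_cases hk2 : 2 ≤ k
    · have h := hz (k - 2) (by omega)
      rw [show k - 2 + 2 = k by omega] at h
      exact Or.inr (by rw [show k - 1 - 1 = k - 2 by omega, heq]; exact h)
    · exact Or.inl (by omega)
  obtain ⟨i, hik, hi, hconst⟩ := exists_left_end_of_le_add_two hz (k - 1) (by omega) hprev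
  refine ⟨i, by omega, hi, fun t ht => ?_⟩
  by_cases htk : t = k - 1
  · rw [htk, hsucc, heq]
  · exact hconst t (mem_Ico.2 ⟨(mem_Ico.1 ht).1, by have := (mem_Ico.1 ht).2; omega⟩)
termination_by k

end Runs

/-- The paper's `y_k - k`. -/
def offset (y : ℕ → ℕ) (k : ℕ) : ℤ := y k - k

theorem IsX.isY_add {m : ℕ} {x x' : ℕ → ℕ} (hx : IsX m x) (hx' : IsX m x') :
    IsY m (fun i => x i + x' i) :=
  ⟨fun i hi => Nat.add_le_add (hx.1 i hi) (hx'.1 i hi),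
    fun i hi => by dsimp only; have := hx.2 i hi; have := hx'.2 i hi; omega⟩

theorem IsY.offset_le_offset_add_two {m : ℕ} {y : ℕ → ℕ} (hy : IsY m y) (t : ℕ)
    (ht : t + 2 ≤ m) : offset y t ≤ offset y (t + 2) := by
  have := hy.2 t ht
  simp only [offset]
  omega

theorem mem_FF_of_offset {m i j : ℕ} {y : ℕ → ℕ} (hij : i ≤ j) (hjm : j ≤ m)
    (hi : i = 0 ∨ offset y (i - 1) < offset y i) (hj : j = m ∨ offset y j < offset y (j + 1))
    (hconst : ∀ t ∈ Ico i j, offset y t = offset y (t + 1)) : (i, j) ∈ FF m y := by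
  simp only [offset] at hi hj hconst
  simp only [FF, mem_filter, mem_product, mem_range]
  refine ⟨⟨by omega, by omega⟩, hij, ?_, by push_cast at hj; exact hj, ?_⟩
  · by_cases hi0 : i = 0
    · exact Or.inl hi0
    · exact Or.inr (by have := hi.resolve_left hi0; omega)
  · intro t ht
    have := hconst t ht
    push_cast at this
    exact this

section Endpoints

variable {m k : ℕ} {y : ℕ → ℕ}

theorem IsY.mem_RR_of_left_end (hy : IsY m y) (hk : k ≤ m)
    (hl : k = 0 ∨ offset y (k - 1) < offset y k) (hr : k = m ∨ offset y k ≤ offset y (k + 1)) :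
    k ∈ RR m y := by
  obtain ⟨j, hkj, hjm, hj, hconst⟩ :=
    exists_right_end_of_le_add_two hy.offset_le_offset_add_two k hk hr
  exact mem_filter.2 ⟨mem_range.2 (by omega), (k, j), mem_FF_of_offset hkj hjm hl hj hconst,
    Or.inl rfl⟩

theorem IsY.mem_RR_of_right_end (hy : IsY m y) (hk : k ≤ m)
    (hl : k = 0 ∨ offset y (k - 1) ≤ offset y k) (hr : k = m ∨ offset y k < offset y (k + 1)) :
    k ∈ RR m y := by
  obtain ⟨i, hik, hi, hconst⟩ :=
    exists_left_end_of_le_add_two hy.offset_le_offset_add_two k hk hl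
  exact mem_filter.2 ⟨mem_range.2 (by omega), (i, k), mem_FF_of_offset hik hk hi hr hconst,
    Or.inr rfl⟩

end Endpoints

theorem SS_subset_RR_add {m : ℕ} {x x' : ℕ → ℕ} (hx : IsX m x) (hx' : IsX m x') :
    SS m x ⊆ RR m (fun i => x i + x' i) := by
  intro k hk
  obtain ⟨hkm, hA, hB⟩ := by simpa only [SS, mem_filter, mem_range] using hk
  have hy := hx.isY_add hx'
  set y := fun i => x i + x' i with hy_def
  have hstep_left (hk0 : k ≠ 0) : offset y (k - 1) ≤ offset y k := by
    have := hA.resolve_left hk0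
    have := hx'.1 (k - 1) (by omega)
    rw [show k - 1 + 1 = k by omega] at this
    simp only [offset, hy_def]
    omega
  have hstep_right (hkm' : k ≠ m) : offset y k ≤ offset y (k + 1) := by
    have := hB.resolve_left hkm'
    have := hx'.1 k (by omega)
    simp only [offset, hy_def]
    omega
  by_cases hl : k = 0 ∨ offset y (k - 1) < offset y k
  · exact hy.mem_RR_of_left_end (by omega) hl (or_iff_not_imp_left.2 hstep_right)
  obtain ⟨hk0, hflat⟩ := not_or.1 hl
  refine hy.mem_RR_of_right_end (by omega) (Or.inr (hstep_left hk0))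
    (or_iff_not_imp_left.2 fun hkm' => lt_of_le_of_ne (hstep_right hkm') fun heq => ?_)
  -- `y (k + 1) - y (k - 1)` would be `2`, but it is at least `3`.
  have := hA.resolve_left hk0
  have := hB.resolve_left hkm'
  have := hx'.2 (k - 1) (by omega)
  rw [show k - 1 + 2 = k + 1 by omega] at this
  simp only [offset, hy_def] at hflat heq
  omega

theorem stmt6 (m : ℕ) (x x' : ℕ → ℕ) (hx : IsX m x) (hx' : IsX m x') :
    SS m x ∪ SS m x' ⊆ RR m (fun i => x i + x' i) := by
  refine union_subset (SS_subset_RR_add hx hx') ?_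
  simp_rw [Nat.add_comm (x _) (x' _)]
  exact SS_subset_RR_add hx' hx
end

section
/- Let m ∈ ℕ, let x, x' ∈ X_m, and set y = x + x' ∈ Y_m. Then 𝔖(x) ∩ 𝔖(x') ⊆ R_0(y), where R_0(y) = { k ∈ [0,m] : [k,k] ∈ 𝔉(y) }. -/
open Finset

/-! At a common strict ascent `k` of `x` and `x'`, the sum `y = x + x'` rises by at least `2`
on each side of `k`, so `y_i - i` rises strictly on both sides and `[k, k]` is a block of `𝔉(y)`. -/

theorem sum_sub_lt_sum_sub_of_lt_of_lt {a b a' b' : ℕ} {i j : ℤ} (h : a < b) (h' : a' < b')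
    (hij : j = i + 1) : ((a + a' : ℕ) : ℤ) - i < ((b + b' : ℕ) : ℤ) - j := by
  omega

theorem mem_RR0_of_sub_lt {m k : ℕ} {y : ℕ → ℕ} (hk : k ≤ m)
    (hl : k = 0 ∨ (y (k - 1) : ℤ) - ((k : ℤ) - 1) < (y k : ℤ) - k)
    (hr : k = m ∨ (y k : ℤ) - k < (y (k + 1) : ℤ) - ((k : ℤ) + 1)) :
    k ∈ RR0 m y := by
  have hk' : k < m + 1 := Nat.lt_succ_of_le hk
  rw [RR0, mem_filter, FF, mem_filter, mem_product, mem_range]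
  exact ⟨hk', ⟨⟨hk', hk'⟩, le_rfl, hl, hr, fun j hj => by simp at hj⟩⟩

theorem stmt7_general (m : ℕ) (x x' : ℕ → ℕ) :
    SS m x ∩ SS m x' ⊆ RR0 m (fun i => x i + x' i) := by
  intro k hk
  simp only [mem_inter, SS, mem_filter, mem_range] at hk
  obtain ⟨⟨hkm, hl, hr⟩, -, hl', hr'⟩ := hk
  refine mem_RR0_of_sub_lt (Nat.le_of_lt_succ hkm) ?_ ?_
  · exact hl.elim .inl fun h => hl'.imp id fun h' => sum_sub_lt_sum_sub_of_lt_of_lt h h' (by ring)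
  · exact hr.elim .inl fun h => hr'.imp id fun h' => sum_sub_lt_sum_sub_of_lt_of_lt h h' rfl

theorem stmt7 (m : ℕ) (x x' : ℕ → ℕ) (hx : IsX m x) (hx' : IsX m x') :
    SS m x ∩ SS m x' ⊆ RR0 m (fun i => x i + x' i) :=
  stmt7_general m x x'
end

section
/- Let m ∈ ℕ and y ∈ Y_m. Then there exists a pair (x, x') ∈ X_m × X_m such that: (i) x + x' = y; (ii) 𝔖(x) ∪ 𝔖(x') = R(y) and 𝔖(x) ∩ 𝔖(x') = R_0(y); and (iii) if 𝔉(y) contains no interval of odd cardinality then 𝔖(x') = ∅. In other words, the set S(y) of such pairs is nonempty. -/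
open Finset

/-!
Write `d k = y (k + 1) - y k`. Membership in `Y_m` says that a zero step is flanked by steps of
size at least two, and the intervals of `𝔉(y)` are the maximal runs of unit steps. Split every
step between `x` and `x'`: a step `d ≠ 1` as `⌈d/2⌉ + ⌊d/2⌋`, so that both sequences increase
strictly across it when `d ≥ 2` and neither does when `d = 0`; along a run of unit steps the unit
goes alternately to `x` and to `x'`, beginning with `x`. Then no interior point of a run lies in
`𝔖(x) ∪ 𝔖(x')`, the left end of a run lies in `𝔖(x)`, and its right end lies in `𝔖(x')` if the
run has odd cardinality and in `𝔖(x)` otherwise; a singleton run lies in both.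
-/

namespace YSplit

theorem exists_run_start {P : ℕ → Prop} {k : ℕ} (hk : P k) :
    ∃ s ≤ k, (s = 0 ∨ ¬P (s - 1)) ∧ ∀ j, s ≤ j → j ≤ k → P j := by
  classical
  have hex : ∃ s, ∀ j, s ≤ j → j ≤ k → P j := ⟨k, fun j h₁ h₂ => le_antisymm h₂ h₁ ▸ hk⟩
  refine ⟨Nat.find hex, Nat.find_min' hex fun j h₁ h₂ => le_antisymm h₂ h₁ ▸ hk, ?_,
    Nat.find_spec hex⟩
  by_contra! h
  refine Nat.find_min hex (Nat.sub_one_lt h.1) fun j hj hjk => ?_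
  rcases hj.eq_or_lt with rfl | hlt
  · exact h.2
  · exact Nat.find_spec hex j (by omega) hjk

theorem exists_run_end {P : ℕ → Prop} {k m : ℕ} (hkm : k ≤ m) :
    ∃ q, k ≤ q ∧ q ≤ m ∧ (q = m ∨ ¬P q) ∧ ∀ j, k ≤ j → j < q → P j := by
  classical
  have hex : ∃ q, k ≤ q ∧ (q = m ∨ ¬P q) := ⟨m, hkm, Or.inl rfl⟩
  obtain ⟨hkq, hq⟩ := Nat.find_spec hex
  refine ⟨Nat.find hex, hkq, Nat.find_min' hex ⟨hkm, Or.inl rfl⟩, hq, fun j hkj hjq => ?_⟩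
  by_contra hj
  exact Nat.find_min hex hjq ⟨hkj, Or.inr hj⟩

def halfStep (d : ℕ → ℕ) : ℕ → ℕ
  | 0 => (d 0 + 1) / 2
  | k + 1 => if d k = 1 ∧ d (k + 1) = 1 then 1 - halfStep d k else (d (k + 1) + 1) / 2

section halfStep

variable (d : ℕ → ℕ) {k : ℕ}

theorem halfStep_le (k : ℕ) : halfStep d k ≤ d k := by
  cases k with
  | zero => simp only [halfStep]; omega
  | succ k => simp only [halfStep]; split_ifs <;> omega

theorem halfStep_pos_lt (h : 2 ≤ d k) : 0 < halfStep d k ∧ halfStep d k < d k := by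
  cases k with
  | zero => simp only [halfStep]; omega
  | succ k => simp only [halfStep]; split_ifs <;> omega

theorem halfStep_add_halfStep_succ (h₀ : d k = 1) (h₁ : d (k + 1) = 1) :
    halfStep d k + halfStep d (k + 1) = 1 := by
  have := halfStep_le d k
  simp only [halfStep, h₀, h₁, and_self, if_true]
  omega

theorem halfStep_eq_one (h : d k = 1) (hprev : k = 0 ∨ d (k - 1) ≠ 1 ∨ halfStep d (k - 1) = 0) :
    halfStep d k = 1 := by
  cases k with
  | zero => simp only [halfStep, h]
  | succ k =>
    simp only [Nat.add_sub_cancel] at hprev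
    simp only [halfStep, h, and_true]
    split_ifs <;> omega

theorem halfStep_of_run {s : ℕ} (hsk : s ≤ k) (hs : s = 0 ∨ d (s - 1) ≠ 1)
    (hrun : ∀ j, s ≤ j → j ≤ k → d j = 1) : halfStep d k = (k - s + 1) % 2 := by
  induction k, hsk using Nat.le_induction with
  | base => rw [halfStep_eq_one d (hrun s le_rfl le_rfl) (hs.imp_right Or.inl)]; omega
  | succ n hsn ih =>
    have := ih fun j hj hjn => hrun j hj (by omega)
    have := halfStep_add_halfStep_succ d (hrun n hsn (by omega)) (hrun (n + 1) (by omega) le_rfl)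
    omega

theorem halfStep_add_halfStep_succ_pos (h : 2 ≤ d k + d (k + 1)) :
    0 < halfStep d k + halfStep d (k + 1) := by
  have := halfStep_pos_lt d (k := k)
  have := halfStep_pos_lt d (k := k + 1)
  have := halfStep_add_halfStep_succ d (k := k)
  omega

theorem sub_halfStep_add_sub_halfStep_succ_pos (h : 2 ≤ d k + d (k + 1)) :
    0 < d k - halfStep d k + (d (k + 1) - halfStep d (k + 1)) := by
  have := halfStep_pos_lt d (k := k)
  have := halfStep_pos_lt d (k := k + 1)
  have := halfStep_add_halfStep_succ d (k := k)
  omega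

end halfStep

section increments

variable {m : ℕ} {x a : ℕ → ℕ}

theorem isX_of_increments (hx : ∀ k, x (k + 1) = x k + a k)
    (h : ∀ i, i + 2 ≤ m → 0 < a i + a (i + 1)) : IsX m x := by
  refine ⟨fun i _ => by rw [hx]; omega, fun i hi => ?_⟩
  have := h i hi
  rw [hx, hx]
  omega

theorem mem_SS_of_increments (hx : ∀ k, x (k + 1) = x k + a k) {k : ℕ} :
    k ∈ SS m x ↔ k ≤ m ∧ (k = 0 ∨ 0 < a (k - 1)) ∧ (k = m ∨ 0 < a k) := by
  simp only [SS, mem_filter, mem_range, Nat.lt_succ_iff]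
  cases k with
  | zero => simp [hx]
  | succ k => simp only [Nat.add_sub_cancel, hx]; omega

end increments

def gap (y : ℕ → ℕ) (k : ℕ) : ℕ := y (k + 1) - y k

section gap

variable {m : ℕ} {y : ℕ → ℕ}

theorem _root_.IsY.add_gap (hy : IsY m y) {k : ℕ} (hk : k < m) : y k + gap y k = y (k + 1) := by
  have := hy.1 k hk
  unfold gap
  omega

theorem _root_.IsY.two_le_gap_add_gap (hy : IsY m y) {i : ℕ} (hi : i + 2 ≤ m) :
    2 ≤ gap y i + gap y (i + 1) := by
  have := hy.1 i (by omega)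
  have := hy.1 (i + 1) (by omega)
  have : y i + 2 ≤ y (i + 1 + 1) := hy.2 i hi
  unfold gap
  omega

theorem mem_FF_iff {p q : ℕ} : (p, q) ∈ FF m y ↔ p ≤ q ∧ q ≤ m ∧
    (p = 0 ∨ 2 ≤ gap y (p - 1)) ∧ (q = m ∨ 2 ≤ gap y q) ∧ ∀ j, p ≤ j → j < q → gap y j = 1 := by
  have hpred : p ≠ 0 → y (p - 1 + 1) = y p := fun hp => by rw [Nat.sub_add_cancel (by omega)]
  simp only [FF, gap, mem_filter, mem_product, mem_range, mem_Ico, and_imp]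
  constructor
  · rintro ⟨⟨-, hq⟩, hpq, hp, hq', hrun⟩
    exact ⟨hpq, by omega, by omega, by omega, fun j hpj hjq => by have := hrun j hpj hjq; omega⟩
  · rintro ⟨hpq, hq, hp, hq', hrun⟩
    exact ⟨⟨by omega, by omega⟩, hpq, by omega, by omega,
      fun j hpj hjq => by have := hrun j hpj hjq; omega⟩

theorem exists_mem_FF_of_left (hy : IsY m y) {k : ℕ} (hk : k ≤ m)
    (hleft : k = 0 ∨ 2 ≤ gap y (k - 1)) (hstep : k = m ∨ 0 < gap y k) :
    ∃ q, (k, q) ∈ FF m y := by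
  obtain ⟨q, hkq, hqm, hq, hrun⟩ := exists_run_end (P := fun j => gap y j = 1) hk
  refine ⟨q, mem_FF_iff.2 ⟨hkq, hqm, hleft, ?_, hrun⟩⟩
  rcases hkq.eq_or_lt with rfl | hlt
  · omega
  · have := hrun (q - 1) (by omega) (by omega)
    have := hy.two_le_gap_add_gap (i := q - 1)
    rw [Nat.sub_add_cancel (by omega)] at this
    omega

theorem exists_mem_FF_of_right (hy : IsY m y) {k : ℕ} (hk : k ≤ m)
    (hright : k = m ∨ 2 ≤ gap y k) (hstep : k = 0 ∨ 0 < gap y (k - 1)) :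
    ∃ p, (p, k) ∈ FF m y := by
  by_cases hunit : 0 < k ∧ gap y (k - 1) = 1
  · obtain ⟨s, hsk, hs, hrun⟩ := exists_run_start (P := fun j => gap y j = 1) hunit.2
    refine ⟨s, mem_FF_iff.2 ⟨by omega, hk, ?_, hright, fun j hsj hjk => hrun j hsj (by omega)⟩⟩
    rcases Nat.eq_zero_or_pos s with hs0 | hs0
    · exact Or.inl hs0
    · have := hrun s le_rfl hsk
      have := hy.two_le_gap_add_gap (i := s - 1)
      rw [Nat.sub_add_cancel hs0] at this
      omega
  · exact ⟨k, mem_FF_iff.2 ⟨le_rfl, hk, by omega, hright, fun j hj hjk => by omega⟩⟩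

theorem mem_RR_iff (hy : IsY m y) {k : ℕ} : k ∈ RR m y ↔ k ≤ m ∧
    ((k = 0 ∨ 2 ≤ gap y (k - 1)) ∧ (k = m ∨ 0 < gap y k) ∨
      (k = m ∨ 2 ≤ gap y k) ∧ (k = 0 ∨ 0 < gap y (k - 1))) := by
  simp only [RR, mem_filter, mem_range, Nat.lt_succ_iff, Prod.exists]
  refine and_congr_right fun hk => ⟨?_, ?_⟩
  · rintro ⟨p, q, hpq, rfl | rfl⟩ <;> obtain ⟨hle, -, hp, hq, hrun⟩ := mem_FF_iff.1 hpq <;>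
      rcases hle.eq_or_lt with rfl | hlt
    · omega
    · have := hrun k le_rfl hlt
      omega
    · omega
    · have := hrun (k - 1) (by omega) (by omega)
      omega
  · rintro (⟨hleft, hstep⟩ | ⟨hright, hstep⟩)
    · obtain ⟨q, hq⟩ := exists_mem_FF_of_left hy hk hleft hstep
      exact ⟨k, q, hq, Or.inl rfl⟩
    · obtain ⟨p, hp⟩ := exists_mem_FF_of_right hy hk hright hstep
      exact ⟨p, k, hp, Or.inr rfl⟩

theorem mem_RR0_iff {k : ℕ} : k ∈ RR0 m y ↔
    k ≤ m ∧ (k = 0 ∨ 2 ≤ gap y (k - 1)) ∧ (k = m ∨ 2 ≤ gap y k) := by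
  simp only [RR0, mem_filter, mem_range, Nat.lt_succ_iff, mem_FF_iff]
  constructor
  · rintro ⟨hk, -, -, hleft, hright, -⟩
    exact ⟨hk, hleft, hright⟩
  · rintro ⟨hk, hleft, hright⟩
    exact ⟨hk, le_rfl, hk, hleft, hright, fun j h₁ h₂ => by omega⟩

end gap

def splitFst (y : ℕ → ℕ) (k : ℕ) : ℕ := (y 0 + 1) / 2 + ∑ j ∈ range k, halfStep (gap y) j

def splitSnd (y : ℕ → ℕ) (k : ℕ) : ℕ := y 0 / 2 + ∑ j ∈ range k, (gap y j - halfStep (gap y) j)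

section split

variable {m : ℕ} {y : ℕ → ℕ}

theorem splitFst_succ (y : ℕ → ℕ) (k : ℕ) :
    splitFst y (k + 1) = splitFst y k + halfStep (gap y) k := by
  rw [splitFst, splitFst, sum_range_succ, add_assoc]

theorem splitSnd_succ (y : ℕ → ℕ) (k : ℕ) :
    splitSnd y (k + 1) = splitSnd y k + (gap y k - halfStep (gap y) k) := by
  rw [splitSnd, splitSnd, sum_range_succ, add_assoc]

theorem splitFst_add_splitSnd (hy : IsY m y) : ∀ i, i ≤ m → splitFst y i + splitSnd y i = y i := by
  intro i hi
  induction i with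
  | zero => simp only [splitFst, splitSnd, range_zero, sum_empty]; omega
  | succ i ih =>
    rw [splitFst_succ, splitSnd_succ, ← hy.add_gap (by omega), ← ih (by omega)]
    have := halfStep_le (gap y) i
    omega

theorem isX_splitFst (hy : IsY m y) : IsX m (splitFst y) :=
  isX_of_increments (splitFst_succ y) fun _ hi =>
    halfStep_add_halfStep_succ_pos _ (hy.two_le_gap_add_gap hi)

theorem isX_splitSnd (hy : IsY m y) : IsX m (splitSnd y) :=
  isX_of_increments (splitSnd_succ y) fun _ hi =>
    sub_halfStep_add_sub_halfStep_succ_pos _ (hy.two_le_gap_add_gap hi)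

theorem mem_SS_split_iff (hy : IsY m y) {k : ℕ} :
    (k ∈ SS m (splitFst y) ∨ k ∈ SS m (splitSnd y) ↔ k ∈ RR m y) ∧
      (k ∈ SS m (splitFst y) ∧ k ∈ SS m (splitSnd y) ↔ k ∈ RR0 m y) := by
  rw [mem_SS_of_increments (splitFst_succ y), mem_SS_of_increments (splitSnd_succ y),
    mem_RR_iff hy, mem_RR0_iff]
  have := halfStep_le (gap y) k
  have := halfStep_pos_lt (gap y) (k := k)
  rcases k with _ | k
  · have := halfStep_eq_one (gap y) (k := 0)
    omega
  · have := halfStep_le (gap y) k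
    have := halfStep_pos_lt (gap y) (k := k)
    have := halfStep_add_halfStep_succ (gap y) (k := k)
    have := halfStep_eq_one (gap y) (k := k + 1)
    have := fun h : k + 2 ≤ m => hy.two_le_gap_add_gap h
    simp only [Nat.add_sub_cancel] at *
    -- a case analysis on the sizes `0`, `1`, `≥ 2` of the steps on either side of `k + 1`
    omega

theorem exists_mem_FF'_of_mem_SS_splitSnd (hy : IsY m y) {k : ℕ}
    (hk : k ∈ SS m (splitSnd y)) : ∃ p, (p, k) ∈ FF' m y := by
  obtain ⟨hkm, hprev, hnext⟩ := (mem_SS_of_increments (splitSnd_succ y)).1 hk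
  have := halfStep_le (gap y) (k - 1)
  have hright : k = m ∨ 2 ≤ gap y k := by
    have := halfStep_le (gap y) k
    have := halfStep_eq_one (gap y) (k := k)
    omega
  obtain ⟨p, hp⟩ := exists_mem_FF_of_right hy hkm hright (by omega)
  refine ⟨p, mem_filter.2 ⟨hp, show Odd (k - p + 1) from ?_⟩⟩
  obtain ⟨hpk, -, hleft, -, hrun⟩ := mem_FF_iff.1 hp
  rw [Nat.odd_iff]
  rcases hpk.eq_or_lt with rfl | hpk
  · omega
  · have := hrun (k - 1) (by omega) (by omega)
    have := halfStep_of_run (gap y) (k := k - 1) (by omega) (by omega)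
      fun j hpj hjk => hrun j hpj (by omega)
    omega

end split

end YSplit

theorem stmt9 (m : ℕ) (y : ℕ → ℕ) (hy : IsY m y) :
    ∃ x x' : ℕ → ℕ, IsS m y x x' := by
  refine ⟨YSplit.splitFst y, YSplit.splitSnd y, YSplit.isX_splitFst hy, YSplit.isX_splitSnd hy,
    YSplit.splitFst_add_splitSnd hy, ?_, ?_, fun hodd => eq_empty_of_forall_notMem fun k hk => ?_⟩
  · ext k
    rw [mem_union]
    exact (YSplit.mem_SS_split_iff hy).1
  · ext k
    rw [mem_inter]
    exact (YSplit.mem_SS_split_iff hy).2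
  · obtain ⟨p, hp⟩ := YSplit.exists_mem_FF'_of_mem_SS_splitSnd hy hk
    simp [hodd] at hp
end

section
/- Let m ∈ ℕ, y ∈ Y_m, and suppose 𝔉(y) contains at least one interval of odd cardinality (𝔉'(y) ≠ ∅). Then for any (x, x') ∈ S(y) one has 𝔖(x) ≠ ∅ and 𝔖(x') ≠ ∅. -/
open Finset

/-!
Take `[i, j] ∈ 𝔉'(y)`. If `i = j` then `i ∈ R₀(y) = 𝔖(x) ∩ 𝔖(x')`. Otherwise `y` grows by exactly
one at each step of `[i, j]`, so exactly one of `x`, `x'` grows at each step, and since both are in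
`X_m` neither can grow twice in a row: the growth alternates between `x` and `x'`. As `j - i` is
even, the sequence that grows at the first step of `[i, j]` does not grow at the last one, so the
endpoints `i, j ∈ R(y) = 𝔖(x) ∪ 𝔖(x')` cannot both lie in the same `𝔖`.
-/

section Alternation

variable {m : ℕ} {x x' y : ℕ → ℕ}

lemma lt_succ_iff_not_succ_lt (hx : IsX m x) (hx' : IsX m x')
    (hsum : ∀ k ≤ m, x k + x' k = y k) {k : ℕ} (hk : k + 2 ≤ m)
    (hy₁ : y (k + 1) = y k + 1) (hy₂ : y (k + 2) = y (k + 1) + 1) :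
    x k < x (k + 1) ↔ ¬ x (k + 1) < x (k + 2) := by
  have := hx.1 k (by omega); have := hx.1 (k + 1) (by omega); have := hx.2 k hk
  have := hx'.1 k (by omega); have := hx'.1 (k + 1) (by omega); have := hx'.2 k hk
  have := hsum k (by omega); have := hsum (k + 1) (by omega); have := hsum (k + 2) hk
  omega

lemma lt_succ_iff_even (hx : IsX m x) (hx' : IsX m x') (hsum : ∀ k ≤ m, x k + x' k = y k)
    {i j : ℕ} (hjm : j ≤ m) (hy : ∀ k, i ≤ k → k < j → y (k + 1) = y k + 1)
    (hi : x i < x (i + 1)) (t : ℕ) (ht : i + t < j) :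
    x (i + t) < x (i + t + 1) ↔ Even t := by
  induction t with
  | zero => simpa using hi
  | succ t ih =>
    rw [Nat.even_add_one, ← ih (by omega),
      lt_succ_iff_not_succ_lt hx hx' hsum (k := i + t) (by omega)
        (hy _ (by omega) (by omega)) (hy _ (by omega) (by omega)), not_not]
    rfl

end Alternation

section Intervals

variable {m i j : ℕ} {y : ℕ → ℕ}

lemma le_of_mem_FF (h : (i, j) ∈ FF m y) : i ≤ j ∧ j ≤ m := by
  simp only [FF, mem_filter, mem_product, mem_range] at h
  omega

lemma succ_eq_of_mem_FF (h : (i, j) ∈ FF m y) {k : ℕ} (hik : i ≤ k) (hkj : k < j) :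
    y (k + 1) = y k + 1 := by
  have := (mem_filter.mp h).2.2.2.2 k (mem_Ico.mpr ⟨hik, hkj⟩)
  omega

lemma fst_mem_RR_of_mem_FF (h : (i, j) ∈ FF m y) : i ∈ RR m y :=
  mem_filter.mpr ⟨mem_range.mpr (by have := le_of_mem_FF h; omega), _, h, .inl rfl⟩

lemma snd_mem_RR_of_mem_FF (h : (i, j) ∈ FF m y) : j ∈ RR m y :=
  mem_filter.mpr ⟨mem_range.mpr (by have := le_of_mem_FF h; omega), _, h, .inr rfl⟩

lemma mem_RR0_of_mem_FF (h : (i, i) ∈ FF m y) : i ∈ RR0 m y :=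
  mem_filter.mpr ⟨mem_range.mpr (by have := le_of_mem_FF h; omega), h⟩

end Intervals

lemma lt_succ_of_mem_SS {m i : ℕ} {x : ℕ → ℕ} (h : i ∈ SS m x) (hi : i < m) :
    x i < x (i + 1) := by
  simp only [SS, mem_filter] at h
  omega

lemma pred_lt_of_mem_SS {m i : ℕ} {x : ℕ → ℕ} (h : i ∈ SS m x) (hi : 0 < i) :
    x (i - 1) < x i := by
  simp only [SS, mem_filter] at h
  omega

lemma notMem_SS_of_mem_SS {m i j : ℕ} {x x' y : ℕ → ℕ} (hx : IsX m x) (hx' : IsX m x')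
    (hsum : ∀ k ≤ m, x k + x' k = y k) (hF : (i, j) ∈ FF m y) (hij : i < j)
    (hodd : Odd (j - i + 1)) (hi : i ∈ SS m x) : j ∉ SS m x := by
  intro hj
  have hjm := (le_of_mem_FF hF).2
  have hlast := lt_succ_iff_even hx hx' hsum hjm (fun _ => succ_eq_of_mem_FF hF)
    (lt_succ_of_mem_SS hi (by omega)) (j - 1 - i) (by omega)
  rw [show i + (j - 1 - i) = j - 1 by omega, show j - 1 + 1 = j by omega] at hlast
  have hodd' : ¬ Even (j - 1 - i) := by
    rw [Nat.not_even_iff_odd]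
    obtain ⟨r, hr⟩ := hodd
    exact ⟨r - 1, by omega⟩
  exact hodd' (hlast.mp (pred_lt_of_mem_SS hj (by omega)))

theorem stmt11_general (m : ℕ) (y x x' : ℕ → ℕ) (hF : FF' m y ≠ ∅)
    (h : IsS m y x x') : SS m x ≠ ∅ ∧ SS m x' ≠ ∅ := by
  obtain ⟨hx, hx', hsum, hunion, hinter, -⟩ := h
  obtain ⟨⟨i, j⟩, hp⟩ := nonempty_iff_ne_empty.mpr hF
  obtain ⟨hFF, hodd⟩ := mem_filter.mp hp
  rcases (le_of_mem_FF hFF).1.eq_or_lt with rfl | hij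
  · have hi := hinter ▸ mem_RR0_of_mem_FF hFF
    exact ⟨ne_empty_of_mem (mem_inter.mp hi).1, ne_empty_of_mem (mem_inter.mp hi).2⟩
  have hsum' : ∀ k ≤ m, x' k + x k = y k := fun k hk => (add_comm _ _).trans (hsum k hk)
  have hi := mem_union.mp (hunion ▸ fst_mem_RR_of_mem_FF hFF)
  have hj := mem_union.mp (hunion ▸ snd_mem_RR_of_mem_FF hFF)
  rcases hi with hi | hi
  · have := notMem_SS_of_mem_SS hx hx' hsum hFF hij hodd hi
    exact ⟨ne_empty_of_mem hi, ne_empty_of_mem (hj.resolve_left this)⟩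
  · have := notMem_SS_of_mem_SS hx' hx hsum' hFF hij hodd hi
    exact ⟨ne_empty_of_mem (hj.resolve_right this), ne_empty_of_mem hi⟩

theorem stmt11 (m : ℕ) (y x x' : ℕ → ℕ) (hy : IsY m y) (hF : FF' m y ≠ ∅)
    (h : IsS m y x x') : SS m x ≠ ∅ ∧ SS m x' ≠ ∅ :=
  stmt11_general m y x x' hF h
end

section
/- Let m ∈ ℕ, x ∈ X_m, and e ∈ ℰ_m (a weakly increasing sequence in ℕ^{m+1}). Then x + e ∈ X_m. Moreover, setting y = x + e + x ∈ Y_m, if 𝔖(e + x) = 𝔖(x) and (x, e + x) ∈ S(y), then every interval in 𝔉(y) has cardinality 1. -/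
/-!
Since `𝔖(x + e) = 𝔖(x)`, the union and the intersection in the definition of `S(y)` coincide,
so `R(y) = R₀(y)`: every endpoint of an interval of `𝔉(y)` is a singleton interval. But the
left endpoint `i` of an interval `[i, j]` with `i < j` cannot be a singleton interval, since
`[i, i] ∈ 𝔉(y)` forces `y_i - i < y_{i+1} - (i+1)` while `[i, j] ∈ 𝔉(y)` forces equality.
-/

open Finset

theorem IsX.add_of_isE {m : ℕ} {x e : ℕ → ℕ} (hx : IsX m x) (he : IsE m e) :
    IsX m (fun i => x i + e i) :=
  ⟨fun i hi => Nat.add_le_add (hx.1 i hi) (he i hi),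
   fun i hi => Nat.add_lt_add_of_lt_of_le (hx.2 i hi)
     ((he i (by omega)).trans (he (i + 1) (by omega)))⟩

theorem RR_eq_RR0_of_SS_eq {m : ℕ} {y x x' : ℕ → ℕ} (hSS : SS m x' = SS m x)
    (hUnion : SS m x ∪ SS m x' = RR m y) (hInter : SS m x ∩ SS m x' = RR0 m y) :
    RR m y = RR0 m y := by
  rw [← hUnion, ← hInter, hSS, union_self, inter_self]

theorem eq_of_mem_FF_of_mem_FF_diag {m : ℕ} {y : ℕ → ℕ} {i j : ℕ}
    (hij : (i, j) ∈ FF m y) (hii : (i, i) ∈ FF m y) : i = j := by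
  simp only [FF, mem_filter, mem_product, mem_range] at hij hii
  obtain ⟨⟨-, hj⟩, hle, -, -, hconst⟩ := hij
  obtain ⟨-, -, -, hright, -⟩ := hii
  by_contra hne
  have hstep := hconst i (mem_Ico.mpr ⟨le_rfl, by omega⟩)
  rcases hright with h | h <;> omega

theorem fst_eq_snd_of_mem_FF_of_RR_eq_RR0 {m : ℕ} {y : ℕ → ℕ} (hR : RR m y = RR0 m y)
    {p : ℕ × ℕ} (hp : p ∈ FF m y) : p.1 = p.2 := by
  have hleft : p.1 ∈ RR m y :=
    mem_filter.mpr ⟨(mem_product.mp (mem_filter.mp hp).1).1, p, hp, Or.inl rfl⟩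
  rw [hR] at hleft
  exact eq_of_mem_FF_of_mem_FF_diag hp (mem_filter.mp hleft).2

theorem stmt16 (m : ℕ) (x e : ℕ → ℕ) (hx : IsX m x) (he : IsE m e) :
    IsX m (fun i => x i + e i) ∧
    (SS m (fun i => x i + e i) = SS m x →
      IsS m (fun i => x i + e i + x i) x (fun i => x i + e i) →
      ∀ p ∈ FF m (fun i => x i + e i + x i), p.1 = p.2) := by
  refine ⟨hx.add_of_isE he, fun hSS hS _ hp => ?_⟩
  obtain ⟨-, -, -, hUnion, hInter, -⟩ := hS
  exact fst_eq_snd_of_mem_FF_of_RR_eq_RR0 (RR_eq_RR0_of_SS_eq hSS hUnion hInter) hp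
end

section
/- Let m ∈ ℕ and x ∈ X_m. Then there exists x̂ ∈ X_m such that 𝔖(x̂) = 𝔖(x), x − x̂ ∈ ℰ_m (i.e., x_i ≥ x̂_i for all i and the difference sequence is weakly increasing), x̂ depends only on 𝔖(x), and for every i ∈ [0,m−1] with x̂_i = x̂_{i+1} one has x_i − x̂_i = x_{i+1} − x̂_{i+1}. -/
/-!
Take `x̂ i := i - ⌊c i / 2⌋`, where `c i` counts the indices `j ≤ i` outside `S = 𝔖(x)`.
For `x ∈ X_m` an index lies outside `S` exactly when `x` is flat just before or just after it,
and two flat steps are never adjacent; so `c i` is odd exactly when `x` is flat at `i`.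
Hence `x̂` is flat wherever `x` is and rises by exactly one wherever `x` rises, and every
claimed property of `x̂` follows by comparing the two sequences step by step.
-/

open Finset

def lusztigHat (S : Finset ℕ) (i : ℕ) : ℕ := i - Nat.count (· ∉ S) (i + 1) / 2

def RisesByOneWith (m : ℕ) (x y : ℕ → ℕ) : Prop :=
  ∀ i < m, (x i = x (i + 1) ∧ y (i + 1) = y i) ∨ (x i < x (i + 1) ∧ y (i + 1) = y i + 1)

lemma mem_SS {m i : ℕ} {x : ℕ → ℕ} :
    i ∈ SS m x ↔ i ≤ m ∧ (i = 0 ∨ x (i - 1) < x i) ∧ (i = m ∨ x i < x (i + 1)) := by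
  simp [SS]

lemma SS_congr_of_lt_iff {m : ℕ} {x y : ℕ → ℕ}
    (h : ∀ i < m, x i < x (i + 1) ↔ y i < y (i + 1)) : SS m x = SS m y := by
  ext i
  simp only [mem_SS]
  refine and_congr_right fun hi => and_congr ?_ ?_
  · rcases i with _ | i
    · simp
    · simpa using h i hi
  · rcases hi.lt_or_eq with hi | rfl
    · simp [hi.ne, h i hi]
    · simp

namespace RisesByOneWith

variable {m : ℕ} {x y : ℕ → ℕ}

lemma lt_iff (h : RisesByOneWith m x y) {i : ℕ} (hi : i < m) :
    x i < x (i + 1) ↔ y i < y (i + 1) := by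
  rcases h i hi with ⟨hflat, hstay⟩ | ⟨hrise, hup⟩ <;> omega

lemma isX (h : RisesByOneWith m x y) (hx : IsX m x) : IsX m y := by
  refine ⟨fun i hi => ?_, fun i hi => ?_⟩
  · rcases h i hi with ⟨hflat, hstay⟩ | ⟨hrise, hup⟩ <;> omega
  · have hx2 := hx.2 i hi
    have hnext := h (i + 1) (by omega)
    rw [show i + 1 + 1 = i + 2 from rfl] at hnext
    rcases h i (by omega) with ⟨hflat, hstay⟩ | ⟨hrise, hup⟩ <;>
      rcases hnext with ⟨hflat', hstay'⟩ | ⟨hrise', hup'⟩ <;> omega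

lemma le_of_le_zero (h : RisesByOneWith m x y) (h0 : y 0 ≤ x 0) : ∀ i ≤ m, y i ≤ x i := by
  intro i
  induction i with
  | zero => exact fun _ => h0
  | succ i ih =>
    intro hi
    have := ih (by omega)
    rcases h i (by omega) with ⟨hflat, hstay⟩ | ⟨hrise, hup⟩ <;> omega

lemma isE_sub (h : RisesByOneWith m x y) : IsE m (fun i => x i - y i) := by
  intro i hi
  show x i - y i ≤ x (i + 1) - y (i + 1)
  rcases h i hi with ⟨hflat, hstay⟩ | ⟨hrise, hup⟩ <;> omega

lemma sub_eq_of_eq (h : RisesByOneWith m x y) {i : ℕ} (hi : i < m) (hy : y i = y (i + 1)) :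
    x i - y i = x (i + 1) - y (i + 1) := by
  rcases h i hi with ⟨hflat, hstay⟩ | ⟨hrise, hup⟩ <;> omega

end RisesByOneWith

section LusztigHat

variable {m : ℕ} {x : ℕ → ℕ}

lemma zero_notMem_SS_iff (hx : IsX m x) : 0 ∉ SS m x ↔ 0 < m ∧ x 0 = x 1 := by
  have : 0 < m → x 0 ≤ x 1 := hx.1 0
  simp [mem_SS]
  omega

lemma succ_notMem_SS_iff (hx : IsX m x) {i : ℕ} (hi : i < m) :
    i + 1 ∉ SS m x ↔ x i = x (i + 1) ∨ (i + 1 < m ∧ x (i + 1) = x (i + 2)) := by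
  have := hx.1 i hi
  have : i + 1 < m → x (i + 1) ≤ x (i + 2) := hx.1 (i + 1)
  simp only [mem_SS, Nat.add_sub_cancel, show i + 1 + 1 = i + 2 from rfl]
  omega

lemma count_notMem_SS_odd_iff (hx : IsX m x) {i : ℕ} (hi : i ≤ m) :
    Nat.count (· ∉ SS m x) (i + 1) % 2 = 1 ↔ i < m ∧ x i = x (i + 1) := by
  induction i with
  | zero =>
    have h0 := zero_notMem_SS_iff hx
    rw [Nat.count_one]
    split_ifs with h
    · simpa using mt h0.mpr (not_not_intro h)
    · simpa using h0.mp h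
  | succ i ih =>
    have ih := ih (by omega)
    have hnot := succ_notMem_SS_iff hx (i := i) (by omega)
    have : i + 2 ≤ m → x i < x (i + 2) := hx.2 i
    rw [Nat.count_succ, show i + 1 + 1 = i + 2 from rfl]
    split_ifs with h
    · have := mt hnot.mpr (not_not_intro h)
      omega
    · have := hnot.mp h
      omega

lemma risesByOneWith_lusztigHat (hx : IsX m x) : RisesByOneWith m x (lusztigHat (SS m x)) := by
  intro i hi
  have hodd := count_notMem_SS_odd_iff hx hi.le
  have hnot := succ_notMem_SS_iff hx hi
  have hcount : Nat.count (· ∉ SS m x) (i + 1) ≤ i + 1 := Nat.count_le _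
  have := hx.1 i hi
  unfold lusztigHat
  rw [Nat.count_succ]
  split_ifs with h
  · have := mt hnot.mpr (not_not_intro h)
    omega
  · have := hnot.mp h
    omega

end LusztigHat

theorem stmt17 (m : ℕ) :
    ∃ hat : Finset ℕ → ℕ → ℕ, ∀ x : ℕ → ℕ, IsX m x →
      IsX m (hat (SS m x)) ∧
      SS m (hat (SS m x)) = SS m x ∧
      (∀ i, i ≤ m → hat (SS m x) i ≤ x i) ∧
      IsE m (fun i => x i - hat (SS m x) i) ∧
      (∀ i, i < m → hat (SS m x) i = hat (SS m x) (i + 1) →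
        x i - hat (SS m x) i = x (i + 1) - hat (SS m x) (i + 1)) := by
  refine ⟨lusztigHat, fun x hx => ?_⟩
  have h := risesByOneWith_lusztigHat hx
  exact ⟨h.isX hx, SS_congr_of_lt_iff fun i hi => (h.lt_iff hi).symm,
    h.le_of_le_zero (by simp [lusztigHat]), h.isE_sub, fun i hi => h.sub_eq_of_eq hi⟩
end

section
/- Let (W, S) be a Coxeter system with S finite, and suppose W is generated by a set {s_i : i ∈ Ĩ} of reflections such that for every proper subset J ⊊ Ĩ the subgroup W_J generated by {s_i : i ∈ J} together with {s_i : i ∈ J} is a Coxeter system (as in the affine Weyl group setting, where Ĩ indexes the simple affine reflections acting on the finite Weyl group). If J, J' ⊊ Ĩ are proper subsets with W_J = W_{J'} ≠ W, then J = J'. -/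
/-!
If `j ∈ J' \ J`, then `s j ∈ W_J ≠ W`, so `K = J ∪ {j}` is proper and `W_K` is a Coxeter system
in which the simple reflection `s j` lies in the parabolic subgroup of the other letters `J`.
That is impossible in any Coxeter system: Tits' representation on `W × ZMod 2` shows that the
parity of the occurrences of a reflection in the right inversion sequence of a word depends only
on its product; this gives the exchange condition, hence every word has a reduced subword with
the same product, and a reduced word for `s j` over `J` is a single letter `a ∈ J` with
`s a = s j`. Finally `s a ≠ s j`, as the rank-two system on `{a, j}` maps onto a dihedral group.
-/

namespace CoxeterSystem

open List
open scoped Classical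

variable {B W : Type*} [Group W] {M : CoxeterMatrix B} (cs : CoxeterSystem M W)

local prefix:100 "s" => cs.simple
local prefix:100 "π" => cs.wordProd
local prefix:100 "ris" => cs.rightInvSeq

/-- The second coordinate records, modulo 2, how often `x.1` occurs in right inversion sequences;
see `titsRep_wordProd`. -/
noncomputable def titsPerm (i : B) : Equiv.Perm (W × ZMod 2) :=
  Function.Involutive.toPerm
    (fun x => (MulAut.conj (s i) x.1, x.2 + if x.1 = s i then 1 else 0))
    (fun x => by
      have hconj : ∀ y, MulAut.conj (s i) (MulAut.conj (s i) y) = y := fun y => by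
        simp [mul_assoc, cs.inv_simple, cs.simple_mul_simple_cancel_left]
      have hfix : MulAut.conj (s i) x.1 = s i ↔ x.1 = s i := by
        rw [← (MulAut.conj (s i)).injective.eq_iff, hconj, MulAut.conj_apply, mul_inv_cancel_right]
      ext
      · exact hconj x.1
      · simp only [hfix, add_assoc, CharTwo.add_self_eq_zero, add_zero])

theorem titsPerm_apply (i : B) (x : W × ZMod 2) :
    cs.titsPerm i x = (MulAut.conj (s i) x.1, x.2 + if x.1 = s i then 1 else 0) := rfl

theorem titsPerm_mul_titsPerm_pow (i i' : B) (n : ℕ) (x : W × ZMod 2) :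
    ((cs.titsPerm i * cs.titsPerm i') ^ n) x =
      (MulAut.conj ((s i * s i') ^ n) x.1,
        x.2 + ∑ k ∈ Finset.range (2 * n), if x.1 = s i' * (s i * s i') ^ k then 1 else 0) := by
  set p := s i * s i'
  have hp : p⁻¹ * s i' = s i' * p := by simp [p, cs.inv_simple, mul_assoc]
  have hconj : MulAut.conj p = MulAut.conj (s i) * MulAut.conj (s i') := map_mul _ _ _
  have hsp : MulAut.conj (s i') (s i' * p) = s i := by simp [p, mul_assoc, cs.inv_simple]
  clear_value p
  induction n generalizing x with
  | zero => simp
  | succ n ih =>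
    have hshift : ∀ k, (MulAut.conj p x.1 = s i' * p ^ k ↔ x.1 = s i' * p ^ (k + 2)) := by
      intro k
      have hconj' : MulAut.conj p⁻¹ (s i' * p ^ k) = s i' * p ^ (k + 2) := by
        rw [MulAut.conj_apply, inv_inv]
        calc p⁻¹ * (s i' * p ^ k) * p = (p⁻¹ * s i') * p ^ k * p := by group
          _ = s i' * p ^ (k + 2) := by rw [hp]; group
      rw [← (MulAut.conj p⁻¹).injective.eq_iff, hconj', ← MulAut.mul_apply, ← map_mul,
        inv_mul_cancel, map_one, MulAut.one_apply]
    rw [pow_succ, Equiv.Perm.mul_apply, Equiv.Perm.mul_apply, titsPerm_apply, titsPerm_apply, ih]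
    ext
    · simp only [pow_succ, map_mul, hconj, MulAut.mul_apply]
    · have h1 : MulAut.conj (s i') x.1 = s i ↔ x.1 = s i' * p := by
        rw [← hsp, (MulAut.conj _).injective.eq_iff]
      simp only [← MulAut.mul_apply, ← hconj, hshift, h1, mul_add, mul_one,
        Finset.sum_range_succ' _ (2 * n + 1), Finset.sum_range_succ' _ (2 * n), zero_add, pow_one,
        pow_zero]
      abel

theorem isLiftable_titsPerm : M.IsLiftable cs.titsPerm := by
  intro i i'
  ext x : 1
  have hper : (s i * s i') ^ M i i' = 1 := cs.simple_mul_simple_pow i i'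
  -- `k ↦ (s i * s i') ^ k` has period `M i i'`, so each term of the sum occurs twice
  rw [titsPerm_mul_titsPerm_pow, two_mul, Finset.sum_range_add]
  simp only [pow_add, hper, one_mul, map_one, MulAut.one_apply, CharTwo.add_self_eq_zero, add_zero,
    Equiv.Perm.one_apply]

noncomputable def titsRep : W →* Equiv.Perm (W × ZMod 2) :=
  cs.lift ⟨cs.titsPerm, cs.isLiftable_titsPerm⟩

theorem titsRep_wordProd (ω : List B) (x : W × ZMod 2) :
    cs.titsRep (π ω) x = (MulAut.conj (π ω) x.1, x.2 + (ris ω).count x.1) := by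
  induction ω generalizing x with
  | nil => simp [titsRep]
  | cons i ω ih =>
    have hmem : (π ω)⁻¹ * s i * π ω = x.1 ↔ MulAut.conj (π ω) x.1 = s i := by
      rw [MulAut.conj_apply]
      constructor <;> intro h <;> simp [← h, mul_assoc]
    rw [wordProd_cons, map_mul, Equiv.Perm.mul_apply, ih, titsRep, lift_apply_simple,
      titsPerm_apply]
    simp only [rightInvSeq, count_cons, beq_iff_eq, hmem, map_mul, MulAut.mul_apply]
    push_cast
    rw [add_assoc]

theorem count_rightInvSeq_eq_of_wordProd_eq {ω ω' : List B} (h : π ω = π ω') (t : W) :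
    ((ris ω).count t : ZMod 2) = (ris ω').count t := by
  have key := cs.titsRep_wordProd ω (t, 0)
  rw [h, titsRep_wordProd] at key
  simpa using (congrArg Prod.snd key).symm

theorem simple_mem_rightInvSeq_of_isRightDescent {ω : List B} {i : B}
    (h : cs.IsRightDescent (π ω) i) : s i ∈ ris ω := by
  obtain ⟨τ, hτ, hτω⟩ := cs.exists_isReduced (π ω * s i)
  have hprod : π (τ.concat i) = π ω := by
    rw [concat_eq_append, wordProd_append, ← hτω, wordProd_singleton,
      simple_mul_simple_cancel_right]
  have hcount : ((ris ω).count (s i) : ZMod 2) = (ris τ).count (s i) + 1 := by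
    rw [← cs.count_rightInvSeq_eq_of_wordProd_eq hprod, rightInvSeq_concat, concat_eq_append,
      count_append]
    have hconj := count_map_of_injective (ris τ) _ (MulAut.conj (s i)).injective (s i)
    rw [MulAut.conj_apply, mul_inv_cancel_right] at hconj
    rw [hconj, count_singleton_self, Nat.cast_add, Nat.cast_one]
  by_contra hnot
  have hτmem : s i ∈ ris τ := by
    by_contra hτnot
    rw [count_eq_zero_of_not_mem hnot, count_eq_zero_of_not_mem hτnot] at hcount
    norm_num at hcount
  have hinv := (cs.isRightInversion_of_mem_rightInvSeq hτ hτmem).2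
  rw [← hτω, simple_mul_simple_cancel_right] at hinv
  exact lt_asymm h hinv

theorem exists_isReduced_sublist (ω : List B) :
    ∃ ω' : List B, ω' <+ ω ∧ cs.IsReduced ω' ∧ π ω' = π ω := by
  induction ω using List.reverseRecOn with
  | nil => exact ⟨[], Sublist.slnil, by simp [IsReduced], rfl⟩
  | append_singleton ω i ih =>
    obtain ⟨ω', hsub, hred, hprod⟩ := ih
    have hprod_append : π (ω ++ [i]) = π ω' * s i := by
      rw [wordProd_append, wordProd_singleton, hprod]
    by_cases hdesc : cs.IsRightDescent (π ω') i
    · obtain ⟨k, hk, hks⟩ := mem_iff_getElem.mp (cs.simple_mem_rightInvSeq_of_isRightDescent hdesc)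
      rw [length_rightInvSeq] at hk
      have herase : π (ω'.eraseIdx k) = π ω' * s i := by
        rw [← wordProd_mul_getD_rightInvSeq, getD_eq_getElem _ _ (by simpa using hk), hks]
      refine ⟨ω'.eraseIdx k, (eraseIdx_sublist ω' k).trans (hsub.trans (sublist_append_left ω [i])),
        ?_, by rw [herase, hprod_append]⟩
      rw [IsReduced, herase, length_eraseIdx_of_lt hk]
      have := cs.isRightDescent_iff.mp hdesc
      rw [hred.eq] at this
      omega
    · refine ⟨ω' ++ [i], hsub.append (Sublist.refl _), ?_,
        by rw [hprod_append, wordProd_append, wordProd_singleton]⟩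
      rw [IsReduced, wordProd_append, wordProd_singleton, cs.not_isRightDescent_iff.mp hdesc,
        hred.eq, length_append, length_singleton]

theorem exists_wordProd_eq_of_mem_closure {A : Set B} {w : W}
    (hw : w ∈ Subgroup.closure (cs.simple '' A)) : ∃ ω : List B, (∀ i ∈ ω, i ∈ A) ∧ π ω = w := by
  induction hw using Subgroup.closure_induction with
  | mem _ hx =>
    obtain ⟨a, ha, rfl⟩ := hx
    exact ⟨[a], by simpa using ha, wordProd_singleton cs a⟩
  | one => exact ⟨[], by simp, wordProd_nil cs⟩
  | mul _ _ _ _ ihx ihy =>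
    obtain ⟨ω₁, h₁, rfl⟩ := ihx
    obtain ⟨ω₂, h₂, rfl⟩ := ihy
    refine ⟨ω₁ ++ ω₂, fun i hi => ?_, wordProd_append cs ω₁ ω₂⟩
    rcases mem_append.mp hi with hi | hi
    exacts [h₁ i hi, h₂ i hi]
  | inv _ _ ih =>
    obtain ⟨ω, hω, rfl⟩ := ih
    exact ⟨ω.reverse, fun i hi => hω i (mem_reverse.mp hi), wordProd_reverse cs ω⟩

theorem exists_simple_eq_of_simple_mem_closure {A : Set B} {j : B}
    (h : s j ∈ Subgroup.closure (cs.simple '' A)) : ∃ a ∈ A, s a = s j := by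
  obtain ⟨ω, hωA, hω⟩ := cs.exists_wordProd_eq_of_mem_closure h
  obtain ⟨ω', hsub, hred, hprod⟩ := cs.exists_isReduced_sublist ω
  have hlen : ω'.length = 1 := by rw [← hred.eq, hprod, hω, length_simple]
  obtain ⟨a, rfl⟩ := List.length_eq_one_iff.mp hlen
  exact ⟨a, hωA a (hsub.subset (mem_singleton_self a)), by rw [← wordProd_singleton, hprod, hω]⟩

theorem simple_ne_simple_of_forall_eq_or_eq {i i' : B} (hne : i ≠ i') (hB : ∀ k, k = i ∨ k = i') :
    s i ≠ s i' := by
  set m := M i i'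
  let f : B → DihedralGroup m := fun k => if k = i then .sr 0 else .sr 1
  have hr : ∀ c : ZMod m, DihedralGroup.r c ^ m = 1 := fun c => by
    rw [DihedralGroup.r_pow, ZMod.natCast_self, mul_zero, DihedralGroup.one_def]
  have hf : M.IsLiftable f := by
    intro k k'
    by_cases hkk : k = k'
    · subst hkk
      rw [M.diagonal, pow_one]
      simp only [f]
      split_ifs <;> exact DihedralGroup.sr_mul_self _
    · have hM : M k k' = m := by
        rcases hB k with rfl | rfl <;> rcases hB k' with rfl | rfl
        exacts [absurd rfl hkk, rfl, M.symmetric _ _, absurd rfl hkk]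
      simp only [f]
      split_ifs <;> rw [DihedralGroup.sr_mul_sr, hM, hr]
  intro h
  have hf_eq := congrArg (cs.lift ⟨f, hf⟩) h
  rw [lift_apply_simple, lift_apply_simple] at hf_eq
  simp only [f, if_pos, if_neg hne.symm, DihedralGroup.sr.injEq] at hf_eq
  have : Nontrivial (ZMod m) := ZMod.nontrivial_iff.mpr (M.off_diagonal i i' hne)
  exact zero_ne_one hf_eq

end CoxeterSystem

open Subgroup

/-- Lusztig's condition that every parahoric subgroup `W_J`, `J ⊊ Ĩ`, is a Coxeter group on the
generators `s j`, `j ∈ J`. -/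
def HasCoxeterParahorics {W ι : Type*} [Group W] (s : ι → W) : Prop :=
  ∀ J : Set ι, J ≠ Set.univ →
    ∃ (M : CoxeterMatrix J) (cs : CoxeterSystem M (closure (s '' J))),
      ∀ j : J, (cs.simple j : W) = s j

namespace HasCoxeterParahorics

variable {W ι : Type*} [Group W] {s : ι → W}

theorem apply_ne_apply (hcox : HasCoxeterParahorics s) {a j : ι} (haj : a ≠ j)
    (hP : ({a, j} : Set ι) ≠ Set.univ) : s a ≠ s j := by
  obtain ⟨M, cs, hcs⟩ := hcox _ hP
  have hpair : ∀ k : ({a, j} : Set ι), k = ⟨a, by simp⟩ ∨ k = ⟨j, by simp⟩ := by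
    rintro ⟨k, rfl | rfl⟩ <;> simp
  have h := cs.simple_ne_simple_of_forall_eq_or_eq (by simpa using haj) hpair
  rwa [Ne, ← Subtype.coe_inj, hcs, hcs] at h

theorem mem_of_apply_mem_closure (hcox : HasCoxeterParahorics s) {J : Set ι} {j : ι}
    (hK : insert j J ≠ Set.univ) (h : s j ∈ closure (s '' J)) : j ∈ J := by
  obtain ⟨M, cs, hcs⟩ := hcox _ hK
  have hmap : (closure (cs.simple '' {k | (k : ι) ∈ J})).map (closure (s '' insert j J)).subtype =
      closure (s '' J) := by
    rw [MonoidHom.map_closure, Set.image_image]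
    congr 1
    ext w
    constructor
    · rintro ⟨k, hk, rfl⟩
      exact ⟨k, hk, (hcs k).symm⟩
    · rintro ⟨a, ha, rfl⟩
      exact ⟨⟨a, Set.mem_insert_of_mem j ha⟩, ha, hcs _⟩
  have hj : cs.simple ⟨j, Set.mem_insert j J⟩ ∈ closure (cs.simple '' {k | (k : ι) ∈ J}) := by
    rw [← hmap] at h
    obtain ⟨g, hg, hgj⟩ := h
    rwa [← Subtype.ext (hgj.trans (hcs ⟨j, Set.mem_insert j J⟩).symm)]
  obtain ⟨a, haJ, ha⟩ := cs.exists_simple_eq_of_simple_mem_closure hj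
  by_contra hjJ
  have hne : (a : ι) ≠ j := fun h => hjJ (h ▸ haJ)
  have hsub : ({(a : ι), j} : Set ι) ⊆ insert j J := Set.insert_subset a.2 (by simp)
  apply hcox.apply_ne_apply hne (ne_top_of_le_ne_top hK hsub)
  rw [← hcs, ha, hcs]

theorem subset_of_closure_image_le (hcox : HasCoxeterParahorics s)
    (hgen : closure (Set.range s) = ⊤) {J J' : Set ι} (hle : closure (s '' J') ≤ closure (s '' J))
    (hne : closure (s '' J) ≠ ⊤) : J' ⊆ J := by
  intro j hj
  have hsj : s j ∈ closure (s '' J) := hle (subset_closure (Set.mem_image_of_mem s hj))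
  refine hcox.mem_of_apply_mem_closure (fun hK => hne ?_) hsj
  rw [eq_top_iff, ← hgen, ← Set.image_univ, ← hK, Set.image_insert_eq, closure_le]
  exact Set.insert_subset hsj subset_closure

end HasCoxeterParahorics

theorem stmt19_general {W : Type*} [Group W] {ι : Type*} (s : ι → W)
    (hgen : Subgroup.closure (Set.range s) = ⊤)
    (hcox : ∀ J : Set ι, J ≠ Set.univ →
      ∃ (M : CoxeterMatrix J) (cs : CoxeterSystem M (Subgroup.closure (s '' J))),
        ∀ j : J, (cs.simple j : W) = s (j : ι))
    (J J' : Set ι)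
    (heq : Subgroup.closure (s '' J) = Subgroup.closure (s '' J'))
    (hne : Subgroup.closure (s '' J) ≠ ⊤) : J = J' :=
  (HasCoxeterParahorics.subset_of_closure_image_le hcox hgen heq.le (heq ▸ hne)).antisymm
    (HasCoxeterParahorics.subset_of_closure_image_le hcox hgen heq.ge hne)

theorem stmt19 {W : Type*} [Group W] {ι : Type*} [Finite ι] (s : ι → W)
    (hgen : Subgroup.closure (Set.range s) = ⊤)
    (hcox : ∀ J : Set ι, J ≠ Set.univ →
      ∃ (M : CoxeterMatrix J) (cs : CoxeterSystem M (Subgroup.closure (s '' J))),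
        ∀ j : J, (cs.simple j : W) = s (j : ι))
    (J J' : Set ι) (hJ : J ≠ Set.univ) (hJ' : J' ≠ Set.univ)
    (heq : Subgroup.closure (s '' J) = Subgroup.closure (s '' J'))
    (hne : Subgroup.closure (s '' J) ≠ ⊤) : J = J' :=
  stmt19_general s hgen hcox J J' heq hne
end
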